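/- Let Ω ⊂ ℝᴺ have finite positive measure and satisfy the Poincaré inequality ‖f - f̄‖₂ ≤ C_P‖∇f‖₂ for f ∈ H¹(Ω). Let 0 < C₀ ≤ C₁ and, for each l ≥ 1/2, let Φ_l : ℝ → ℝ be continuous with (C₀|y|)^l ≤ |Φ_l(y)| ≤ (C₁|y|)^l and y·Φ_l(y) > 0 for y ≠ 0. Then there exists C_P* > 0, depending only on Ω, C₀, C₁ (and not on l), such that ‖Φ_l(ξ)‖₂ ≤ C_P*‖∇Φ_l(ξ)‖₂ for every l ≥ 1/2 and every ξ ∈ L¹(Ω) with zero mean and Φ_l(ξ) ∈ H¹(Ω). -/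

import Mathlib

/-!
Put `a = 1/l ∈ (0, 2]` and `u = Φ_l ∘ ξ`: then `u` has the sign of `ξ` and
`C₀|ξ| ≤ |u|^a ≤ C₁|ξ|`. Since `‖u‖² = ‖u - m‖² + m²|Ω|` for the mean `m` of `u`, the Poincaré
inequality reduces the claim to `m²|Ω| ≤ 4(1 + C₁/C₀)‖u - m‖²`. For `m > 0` (`m < 0` is
symmetric) this is the integral of the pointwise bound `m² ≤ 4(1 + C₁/C₀)(u - m)² + 4m^(2-a) C₁ ξ`,
whose last term integrates to zero: where `u ≥ m/2`, `C₁ξ ≥ |u|^a ≥ m^a/4`; where `u < m/2`,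
`(u - m)² ≥ m²/4`, and if moreover `ξ < 0` then `u < 0`, so `|u - m| ≥ m` and
`C₀|ξ| ≤ |u - m|^a ≤ m^(a-2)(u - m)²` as `a ≤ 2`.
-/

open Real Set MeasureTheory

noncomputable def lpNormOn {N : ℕ} (Ω : Set (EuclideanSpace ℝ (Fin N))) (p : ℝ)
    (f : EuclideanSpace ℝ (Fin N) → ℝ) : ℝ :=
  (∫ x in Ω, |f x| ^ p) ^ (1 / p)

noncomputable def gradNormOn {N : ℕ} (Ω : Set (EuclideanSpace ℝ (Fin N)))
    (f : EuclideanSpace ℝ (Fin N) → ℝ) : ℝ :=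
  (∫ x in Ω, ‖fderiv ℝ f x‖ ^ (2:ℝ)) ^ ((1:ℝ) / 2)

noncomputable def meanOn {N : ℕ} (Ω : Set (EuclideanSpace ℝ (Fin N)))
    (f : EuclideanSpace ℝ (Fin N) → ℝ) : ℝ :=
  (∫ x in Ω, f x) / (volume Ω).toReal

/-- Membership in (our model of) `H¹(Ω)`. -/
def MemH1On {N : ℕ} (Ω : Set (EuclideanSpace ℝ (Fin N)))
    (f : EuclideanSpace ℝ (Fin N) → ℝ) : Prop :=
  Differentiable ℝ f ∧ IntegrableOn f Ω volume ∧
    IntegrableOn (fun x => (f x) ^ (2:ℝ)) Ω volume ∧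
    IntegrableOn (fun x => ‖fderiv ℝ f x‖ ^ (2:ℝ)) Ω volume

theorem rpow_le_rpow_sub_two_mul_sq {a m s : ℝ} (hm : 0 < m) (hms : m ≤ s) (ha : a ≤ 2) :
    s ^ a ≤ m ^ (a - 2) * s ^ 2 := by
  have hs : 0 < s := hm.trans_le hms
  calc s ^ a = s ^ (a - 2) * s ^ 2 := by
        rw [← rpow_natCast, ← rpow_add hs]; norm_num
    _ ≤ m ^ (a - 2) * s ^ 2 :=
        mul_le_mul_of_nonneg_right (rpow_le_rpow_of_nonpos hm hms (by linarith)) (sq_nonneg s)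

def PowerComparable (a C₀ C₁ y v : ℝ) : Prop :=
  0 ≤ y * v ∧ C₀ * |y| ≤ |v| ^ a ∧ |v| ^ a ≤ C₁ * |y|

namespace PowerComparable

variable {a C₀ C₁ y v : ℝ}

theorem of_rpow_bounds {l : ℝ} (hl : 0 < l) (hC₀ : 0 ≤ C₀) (hC₁ : 0 ≤ C₁)
    (hlow : (C₀ * |y|) ^ l ≤ |v|) (hup : |v| ≤ (C₁ * |y|) ^ l) (hsign : y ≠ 0 → 0 < y * v) :
    PowerComparable l⁻¹ C₀ C₁ y v := by
  refine ⟨?_, (le_rpow_inv_iff_of_pos (by positivity) (abs_nonneg v) hl).2 hlow,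
    (rpow_inv_le_iff_of_pos (abs_nonneg v) (by positivity) hl).2 hup⟩
  rcases eq_or_ne y 0 with rfl | hy
  · simp
  · exact (hsign hy).le

theorem neg (h : PowerComparable a C₀ C₁ y v) : PowerComparable a C₀ C₁ (-y) (-v) := by
  simpa [PowerComparable] using h

theorem nonneg_of_nonneg (h : PowerComparable a C₀ C₁ y v) (ha : 0 < a) (hC₀ : 0 < C₀)
    (hv : 0 ≤ v) : 0 ≤ y := by
  rcases hv.eq_or_lt with rfl | hv
  · have : C₀ * |y| ≤ 0 := by simpa [zero_rpow ha.ne'] using h.2.1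
    have : |y| ≤ 0 := by nlinarith [abs_nonneg y]
    simp [abs_nonpos_iff.1 this]
  · exact nonneg_of_mul_nonneg_left h.1 hv

theorem rpow_le_of_half_le (h : PowerComparable a C₀ C₁ y v) (ha : 0 ≤ a) (ha2 : a ≤ 2)
    {m : ℝ} (hm : 0 ≤ m) (hv : m / 2 ≤ v) : m ^ a ≤ 4 * (C₁ * |y|) :=
  calc m ^ a = 2 ^ a * (m / 2) ^ a := by
        rw [div_rpow hm zero_le_two]; field_simp
    _ ≤ 4 * |v| ^ a := by
        gcongr
        · calc (2 : ℝ) ^ a ≤ 2 ^ (2 : ℝ) := rpow_le_rpow_of_exponent_le one_le_two ha2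
            _ = 4 := by norm_num
        · exact hv.trans (le_abs_self v)
    _ ≤ 4 * (C₁ * |y|) := by gcongr; exact h.2.2

theorem le_rpow_mul_sq_sub_of_neg (h : PowerComparable a C₀ C₁ y v) (ha : 0 ≤ a) (ha2 : a ≤ 2)
    {m : ℝ} (hm : 0 < m) (hy : y < 0) : C₀ * |y| ≤ m ^ (a - 2) * (v - m) ^ 2 := by
  have hv : v ≤ 0 := nonpos_of_mul_nonneg_right h.1 hy
  have hvm : |v - m| = m - v := by rw [abs_of_neg (by linarith)]; ring
  calc C₀ * |y| ≤ |v| ^ a := h.2.1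
    _ ≤ |v - m| ^ a := rpow_le_rpow (abs_nonneg v) (by rw [hvm, abs_of_nonpos hv]; linarith) ha
    _ ≤ m ^ (a - 2) * |v - m| ^ 2 := rpow_le_rpow_sub_two_mul_sq hm (by rw [hvm]; linarith) ha2
    _ = m ^ (a - 2) * (v - m) ^ 2 := by rw [sq_abs]

end PowerComparable

theorem sq_le_of_powerComparable_of_pos {a C₀ C₁ y v m : ℝ}
    (h : PowerComparable a C₀ C₁ y v) (ha : 0 < a) (ha2 : a ≤ 2) (hC₀ : 0 < C₀)
    (hC₁ : 0 ≤ C₁) (hm : 0 < m) :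
    m ^ 2 ≤ 4 * (1 + C₁ / C₀) * (v - m) ^ 2 + 4 * m ^ (2 - a) * C₁ * y := by
  set p := m ^ (2 - a)
  have hp : 0 < p := rpow_pos_of_pos hm _
  have hpm : p * m ^ a = m ^ 2 := by rw [← rpow_add hm, ← rpow_natCast]; norm_num
  have hpm' : p * m ^ (a - 2) = 1 := by rw [← rpow_add hm]; norm_num
  have hK : 0 ≤ C₁ / C₀ := by positivity
  rcases le_or_gt (m / 2) v with hv | hv
  · have hy := h.nonneg_of_nonneg ha hC₀ (by linarith)
    have hma := h.rpow_le_of_half_le ha.le ha2 hm.le hv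
    rw [abs_of_nonneg hy] at hma
    nlinarith [mul_le_mul_of_nonneg_left hma hp.le, sq_nonneg (v - m)]
  · have hfar : m ^ 2 ≤ 4 * (v - m) ^ 2 := by nlinarith
    suffices -(C₁ / C₀ * (v - m) ^ 2) ≤ p * C₁ * y by nlinarith
    rcases le_or_gt 0 y with hy | hy
    · nlinarith [mul_nonneg (mul_nonneg hp.le hC₁) hy, mul_nonneg hK (sq_nonneg (v - m))]
    have hbound := h.le_rpow_mul_sq_sub_of_neg ha.le ha2 hm hy
    rw [abs_of_neg hy] at hbound
    have : p * -y ≤ (v - m) ^ 2 / C₀ := by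
      rw [le_div_iff₀ hC₀]
      nlinarith [mul_le_mul_of_nonneg_left hbound hp.le]
    calc -(C₁ / C₀ * (v - m) ^ 2) = -(C₁ * ((v - m) ^ 2 / C₀)) := by ring
      _ ≤ -(C₁ * (p * -y)) := by gcongr
      _ = p * C₁ * y := by ring

theorem exists_sq_le_add_mul_of_powerComparable {a C₀ C₁ : ℝ} (ha : 0 < a) (ha2 : a ≤ 2)
    (hC₀ : 0 < C₀) (hC₁ : 0 ≤ C₁) (m : ℝ) :
    ∃ c : ℝ, ∀ y v, PowerComparable a C₀ C₁ y v →
      m ^ 2 ≤ 4 * (1 + C₁ / C₀) * (v - m) ^ 2 + c * y := by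
  rcases lt_trichotomy m 0 with hm | rfl | hm
  · refine ⟨-(4 * (-m) ^ (2 - a) * C₁), fun y v h => ?_⟩
    have := sq_le_of_powerComparable_of_pos h.neg ha ha2 hC₀ hC₁ (neg_pos.2 hm)
    convert this using 1 <;> ring
  · exact ⟨0, fun _ v _ => by rw [zero_mul, add_zero, sub_zero, sq 0, zero_mul]; positivity⟩
  · exact ⟨4 * m ^ (2 - a) * C₁, fun y v h => sq_le_of_powerComparable_of_pos h ha ha2 hC₀ hC₁ hm⟩

section FiniteMeasure

variable {α : Type*} [MeasurableSpace α] {μ : Measure α} [IsFiniteMeasure μ] {u : α → ℝ}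

theorem integral_sq_eq_integral_sub_average_sq_add (hu : MemLp u 2 μ) :
    ∫ x, u x ^ 2 ∂μ = ∫ x, (u x - ⨍ y, u y ∂μ) ^ 2 ∂μ + (⨍ y, u y ∂μ) ^ 2 * μ.real univ := by
  set m := ⨍ y, u y ∂μ
  have hmean : μ.real univ * m = ∫ x, u x ∂μ := measure_smul_average μ u
  have hu1 : Integrable (fun x => 2 * m * u x) μ := (hu.integrable one_le_two).const_mul _
  have hexpand : ∫ x, (u x - m) ^ 2 ∂μ = ∫ x, u x ^ 2 ∂μ - ∫ x, (2 * m * u x - m ^ 2) ∂μ := by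
    rw [← integral_sub (g := fun x => 2 * m * u x - m ^ 2) hu.integrable_sq
      (hu1.sub (integrable_const _))]
    congr 1; ext x; ring
  rw [hexpand, integral_sub hu1 (integrable_const _), integral_const_mul, integral_const,
    smul_eq_mul, ← hmean]
  ring

theorem sq_mul_measureReal_univ_le_of_powerComparable {a C₀ C₁ : ℝ} {ξ : α → ℝ}
    (ha : 0 < a) (ha2 : a ≤ 2) (hC₀ : 0 < C₀) (hC₁ : 0 ≤ C₁) (hu : MemLp u 2 μ)
    (hξ : Integrable ξ μ) (hξ0 : ∫ x, ξ x ∂μ = 0)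
    (hcomp : ∀ x, PowerComparable a C₀ C₁ (ξ x) (u x)) (m : ℝ) :
    m ^ 2 * μ.real univ ≤ 4 * (1 + C₁ / C₀) * ∫ x, (u x - m) ^ 2 ∂μ := by
  obtain ⟨c, hc⟩ := exists_sq_le_add_mul_of_powerComparable ha ha2 hC₀ hC₁ m
  have hvar : Integrable (fun x => 4 * (1 + C₁ / C₀) * (u x - m) ^ 2) μ :=
    (hu.sub (memLp_const m)).integrable_sq.const_mul _
  calc m ^ 2 * μ.real univ = ∫ _, m ^ 2 ∂μ := by rw [integral_const, smul_eq_mul, mul_comm]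
    _ ≤ ∫ x, (4 * (1 + C₁ / C₀) * (u x - m) ^ 2 + c * ξ x) ∂μ :=
        integral_mono (integrable_const _) (hvar.add (hξ.const_mul c)) fun x => hc _ _ (hcomp x)
    _ = 4 * (1 + C₁ / C₀) * ∫ x, (u x - m) ^ 2 ∂μ := by
        rw [integral_add hvar (hξ.const_mul c), integral_const_mul, integral_const_mul, hξ0,
          mul_zero, add_zero]

theorem integral_sq_le_of_powerComparable {a C₀ C₁ : ℝ} {ξ : α → ℝ}
    (ha : 0 < a) (ha2 : a ≤ 2) (hC₀ : 0 < C₀) (hC₁ : 0 ≤ C₁) (hu : MemLp u 2 μ)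
    (hξ : Integrable ξ μ) (hξ0 : ∫ x, ξ x ∂μ = 0)
    (hcomp : ∀ x, PowerComparable a C₀ C₁ (ξ x) (u x)) :
    ∫ x, u x ^ 2 ∂μ ≤ (5 + 4 * (C₁ / C₀)) * ∫ x, (u x - ⨍ y, u y ∂μ) ^ 2 ∂μ := by
  have := sq_mul_measureReal_univ_le_of_powerComparable ha ha2 hC₀ hC₁ hu hξ hξ0 hcomp
    (⨍ y, u y ∂μ)
  rw [integral_sq_eq_integral_sub_average_sq_add hu]
  linarith

end FiniteMeasure

section Sobolev

variable {N : ℕ} {Ω : Set (EuclideanSpace ℝ (Fin N))} {f : EuclideanSpace ℝ (Fin N) → ℝ}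

theorem lpNormOn_two_eq_sqrt : lpNormOn Ω 2 f = √(∫ x in Ω, f x ^ 2) := by
  simp [lpNormOn, sqrt_eq_rpow]

theorem meanOn_eq_setAverage : meanOn Ω f = ⨍ x in Ω, f x := by
  rw [meanOn, setAverage_eq, measureReal_def, smul_eq_mul, div_eq_inv_mul]

theorem MemH1On.memLp_two (hf : MemH1On Ω f) : MemLp f 2 (volume.restrict Ω) :=
  (memLp_two_iff_integrable_sq hf.1.continuous.aestronglyMeasurable).2 <| by
    simpa only [IntegrableOn, rpow_two] using hf.2.2.1

end Sobolev

theorem nonlinear_Poincare_inequality_general {N : ℕ}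
    (Ω : Set (EuclideanSpace ℝ (Fin N)))
    (hΩfin : volume Ω < ⊤)
    (CP : ℝ) (hCP : 0 < CP)
    (hPoincare : ∀ f : EuclideanSpace ℝ (Fin N) → ℝ, MemH1On Ω f →
      lpNormOn Ω 2 (fun x => f x - meanOn Ω f) ≤ CP * gradNormOn Ω f)
    (C₀ C₁ : ℝ) (hC₀ : 0 < C₀) (hC₀₁ : C₀ ≤ C₁)
    (Φ : ℝ → ℝ → ℝ)
    (hΦlow : ∀ l : ℝ, 1 / 2 ≤ l → ∀ y : ℝ, (C₀ * |y|) ^ l ≤ |Φ l y|)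
    (hΦup : ∀ l : ℝ, 1 / 2 ≤ l → ∀ y : ℝ, |Φ l y| ≤ (C₁ * |y|) ^ l)
    (hΦsign : ∀ l : ℝ, 1 / 2 ≤ l → ∀ y : ℝ, y ≠ 0 → 0 < y * Φ l y) :
    ∃ CPs : ℝ, 0 < CPs ∧
      ∀ l : ℝ, 1 / 2 ≤ l → ∀ ξ : EuclideanSpace ℝ (Fin N) → ℝ,
        IntegrableOn ξ Ω volume → (∫ x in Ω, ξ x) = 0 →
        MemH1On Ω (fun x => Φ l (ξ x)) →
        lpNormOn Ω 2 (fun x => Φ l (ξ x)) ≤ CPs * gradNormOn Ω (fun x => Φ l (ξ x)) := by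
  have hC₁ : 0 ≤ C₁ := hC₀.le.trans hC₀₁
  have : IsFiniteMeasure (volume.restrict Ω) := isFiniteMeasure_restrict.2 hΩfin.ne
  refine ⟨√(5 + 4 * (C₁ / C₀)) * CP, by positivity, fun l hl ξ hξ hξ0 hH1 => ?_⟩
  have hl0 : 0 < l := by linarith
  have hl2 : l⁻¹ ≤ 2 := by rw [inv_le_comm₀ hl0 two_pos]; linarith
  have hcomp (x) : PowerComparable l⁻¹ C₀ C₁ (ξ x) (Φ l (ξ x)) :=
    .of_rpow_bounds hl0 hC₀.le hC₁ (hΦlow l hl _) (hΦup l hl _) (hΦsign l hl _)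
  have hvar := integral_sq_le_of_powerComparable (inv_pos.2 hl0) hl2 hC₀ hC₁ hH1.memLp_two hξ
    hξ0 hcomp
  calc lpNormOn Ω 2 (fun x => Φ l (ξ x))
      ≤ √(5 + 4 * (C₁ / C₀)) * lpNormOn Ω 2 (fun x => Φ l (ξ x) - meanOn Ω fun x => Φ l (ξ x)) := by
        rw [lpNormOn_two_eq_sqrt, lpNormOn_two_eq_sqrt, meanOn_eq_setAverage,
          ← sqrt_mul (by positivity)]
        exact sqrt_le_sqrt hvar
    _ ≤ √(5 + 4 * (C₁ / C₀)) * (CP * gradNormOn Ω fun x => Φ l (ξ x)) := by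
        gcongr
        exact hPoincare _ hH1
    _ = _ := by ring

theorem nonlinear_Poincare_inequality {N : ℕ}
    (Ω : Set (EuclideanSpace ℝ (Fin N))) (hΩmeas : MeasurableSet Ω)
    (hΩpos : 0 < volume Ω) (hΩfin : volume Ω < ⊤)
    (CP : ℝ) (hCP : 0 < CP)
    (hPoincare : ∀ f : EuclideanSpace ℝ (Fin N) → ℝ, MemH1On Ω f →
      lpNormOn Ω 2 (fun x => f x - meanOn Ω f) ≤ CP * gradNormOn Ω f)
    (C₀ C₁ : ℝ) (hC₀ : 0 < C₀) (hC₀₁ : C₀ ≤ C₁)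
    (Φ : ℝ → ℝ → ℝ)
    (hΦcont : ∀ l : ℝ, 1 / 2 ≤ l → Continuous (Φ l))
    (hΦlow : ∀ l : ℝ, 1 / 2 ≤ l → ∀ y : ℝ, (C₀ * |y|) ^ l ≤ |Φ l y|)
    (hΦup : ∀ l : ℝ, 1 / 2 ≤ l → ∀ y : ℝ, |Φ l y| ≤ (C₁ * |y|) ^ l)
    (hΦsign : ∀ l : ℝ, 1 / 2 ≤ l → ∀ y : ℝ, y ≠ 0 → 0 < y * Φ l y) :
    ∃ CPs : ℝ, 0 < CPs ∧
      ∀ l : ℝ, 1 / 2 ≤ l → ∀ ξ : EuclideanSpace ℝ (Fin N) → ℝ,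
        IntegrableOn ξ Ω volume → (∫ x in Ω, ξ x) = 0 →
        MemH1On Ω (fun x => Φ l (ξ x)) →
        lpNormOn Ω 2 (fun x => Φ l (ξ x)) ≤ CPs * gradNormOn Ω (fun x => Φ l (ξ x)) :=
  nonlinear_Poincare_inequality_general Ω hΩfin CP hCP hPoincare C₀ C₁ hC₀ hC₀₁ Φ hΦlow hΦup hΦsign
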